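/- arXiv:2308.08426 — 5 statements merged into one kernel-verified Lean document; each statement's English description precedes it below -/
import Mathlib

section
/- Discrete-time first-order optimality conditions (Pontryagin/KKT). Suppose the maps f, ℓ, φ are continuously differentiable and fix θ ∈ ℝ^{n_θ}. Let (x*_0,…,x*_N, u*_0,…,u*_{N−1}) be a trajectory that is feasible (x*_0 = ξ(θ) and x*_{k+1} = f(x*_k,u*_k,θ) for all k) and is a local minimizer of the total cost J(x,u) = Σ_{k=0}^{N−1} ℓ(x_k,u_k,θ) + φ(x_N,θ) among all feasible trajectories (equivalently, the control sequence u* is a local minimizer of the induced cost as a function of the control sequence alone). Then the multipliers defined backward by λ_N = ∇_x φ(x*_N,θ) and λ_k = ∇_x ℓ(x*_k,u*_k,θ) + (D_x f(x*_k,u*_k,θ))ᵀ λ_{k+1} satisfy the stationarity conditions 0 = ∇_u ℓ(x*_k,u*_k,θ) + (D_u f(x*_k,u*_k,θ))ᵀ λ_{k+1} for every k = 0,…,N−1; in particular, together with x*, these λ's make every partial gradient of the Lagrangian 𝓛 vanish. -/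
/-!
Perturb only the `k`-th control to `w`. The states before stage `k` do not move, and the cost
from stage `k + 1` on is the cost-to-go `V_{k+1}` at `f (x k) w`, so the cost reduces to
`w ↦ c + ℓ (x k) w + V_{k+1} (f (x k) w)`. The backward recursion defining `lam` is the chain
rule for `V_j y = ℓ y (u j) + V_{j+1} (f y (u j))`, so `∇V_j (x j) = lam j`, and the first-order
condition at the local minimum `u k` of the reduced cost is the stationarity equation.
-/

open scoped InnerProductSpace

noncomputable section

/-- Euclidean space `ℝ^n`. -/
abbrev E (n : ℕ) : Type := EuclideanSpace ℝ (Fin n)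

open Finset InnerProductSpace

section Gradient

variable {X Y : Type*} [NormedAddCommGroup X] [InnerProductSpace ℝ X] [CompleteSpace X]
  [NormedAddCommGroup Y] [InnerProductSpace ℝ Y] [CompleteSpace Y]

theorem HasGradientAt.add {g h : X → ℝ} {a b x : X} (hg : HasGradientAt g a x)
    (hh : HasGradientAt h b x) : HasGradientAt (fun y => g y + h y) (a + b) x := by
  rw [hasGradientAt_iff_hasFDerivAt, map_add]
  exact HasFDerivAt.add hg hh

theorem HasGradientAt.const_add {g : X → ℝ} {a x : X} (hg : HasGradientAt g a x) (c : ℝ) :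
    HasGradientAt (fun y => c + g y) a x :=
  HasFDerivAt.const_add c hg

theorem HasGradientAt.comp_hasFDerivAt {g : Y → ℝ} {h : X → Y} {a : Y} {A : X →L[ℝ] Y}
    {x : X} (hg : HasGradientAt g a (h x)) (hh : HasFDerivAt h A x) :
    HasGradientAt (fun y => g (h y)) (ContinuousLinearMap.adjoint A a) x := by
  have hdual : toDual ℝ X (ContinuousLinearMap.adjoint A a) = (toDual ℝ Y a).comp A := by
    ext y
    simp [ContinuousLinearMap.adjoint_inner_left]
  rw [hasGradientAt_iff_hasFDerivAt, hdual]
  exact HasFDerivAt.comp x hg hh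

theorem IsLocalMin.hasGradientAt_eq_zero {g : X → ℝ} {a x : X} (hmin : IsLocalMin g x)
    (hg : HasGradientAt g a x) : a = 0 :=
  (toDual ℝ X).map_eq_zero_iff.mp (hmin.hasFDerivAt_eq_zero hg)

end Gradient

section CostToGo

variable {X U : Type*} (f : X → U → X) (ℓ : X → U → ℝ) (φ : X → ℝ)

/-- `costToGo f ℓ φ v m j y`: `m` is the number of remaining steps, `j` the current stage. -/
def costToGo (v : ℕ → U) : ℕ → ℕ → X → ℝ
  | 0, _, y => φ y
  | m + 1, j, y => ℓ y (v j) + costToGo v m (j + 1) (f y (v j))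

variable {f ℓ φ}

theorem costToGo_congr {v v' : ℕ → U} {j : ℕ} (hv : ∀ i ≥ j, v i = v' i) (m : ℕ) :
    costToGo f ℓ φ v m j = costToGo f ℓ φ v' m j := by
  induction m generalizing j with
  | zero => rfl
  | succ m ih =>
    funext y
    rw [costToGo, costToGo, hv j le_rfl, ih (j := j + 1) fun i hi => hv i (by omega)]

theorem costToGo_eq_sum {v : ℕ → U} {t : ℕ → X} (ht : ∀ i, t (i + 1) = f (t i) (v i))
    (m j : ℕ) :
    costToGo f ℓ φ v m j (t j) = ∑ i ∈ Ico j (j + m), ℓ (t i) (v i) + φ (t (j + m)) := by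
  induction m generalizing j with
  | zero => simp [costToGo]
  | succ m ih =>
    rw [costToGo, ← ht, ih (j + 1), show j + 1 + m = j + (m + 1) by omega,
      sum_eq_sum_Ico_succ_bot (show j < j + (m + 1) by omega), add_assoc]

theorem cost_eq_sum_add_costToGo {v : ℕ → U} {t : ℕ → X}
    (ht : ∀ i, t (i + 1) = f (t i) (v i)) {k N : ℕ} (hkN : k ≤ N) :
    ∑ i ∈ range N, ℓ (t i) (v i) + φ (t N) =
      ∑ i ∈ range k, ℓ (t i) (v i) + costToGo f ℓ φ v (N - k) k (t k) := by
  rw [costToGo_eq_sum ht, Nat.add_sub_cancel' hkN, ← add_assoc, sum_range_add_sum_Ico _ hkN]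

theorem states_eq_of_controls_eq {t s : ℕ → X} {v w : ℕ → U} {k : ℕ} (h0 : t 0 = s 0)
    (ht : ∀ i < k, t (i + 1) = f (t i) (v i)) (hs : ∀ i < k, s (i + 1) = f (s i) (w i))
    (hvw : ∀ i < k, v i = w i) : ∀ i ≤ k, t i = s i := by
  intro i hi
  induction i with
  | zero => exact h0
  | succ i ih => rw [ht i hi, hs i hi, ih (by omega), hvw i hi]

end CostToGo

section Stationarity

variable {X U : Type*} [NormedAddCommGroup X] [InnerProductSpace ℝ X] [CompleteSpace X]
  {f : X → U → X} {ℓ : X → U → ℝ} {φ : X → ℝ} {x : ℕ → X} {u : ℕ → U} {lam : ℕ → X}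
  {N : ℕ}

theorem hasGradientAt_costToGo (hdyn : ∀ j < N, x (j + 1) = f (x j) (u j))
    (hfx : ∀ j < N, DifferentiableAt ℝ (fun y => f y (u j)) (x j))
    (hℓx : ∀ j < N, DifferentiableAt ℝ (fun y => ℓ y (u j)) (x j))
    (hφ : DifferentiableAt ℝ φ (x N))
    (hlamN : lam N = gradient φ (x N))
    (hlam : ∀ j < N, lam j = gradient (fun y => ℓ y (u j)) (x j)
      + ContinuousLinearMap.adjoint (fderiv ℝ (fun y => f y (u j)) (x j)) (lam (j + 1))) :
    ∀ m j, j + m = N → HasGradientAt (costToGo f ℓ φ u m j) (lam j) (x j) := by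
  intro m
  induction m with
  | zero =>
    intro j hj
    rw [show j = N by omega, hlamN]
    exact hφ.hasGradientAt
  | succ m ih =>
    intro j hj
    have hjN : j < N := by omega
    have hnext : HasGradientAt (costToGo f ℓ φ u m (j + 1)) (lam (j + 1)) (f (x j) (u j)) :=
      hdyn j hjN ▸ ih (j + 1) (by omega)
    rw [hlam j hjN]
    exact (hℓx j hjN).hasGradientAt.add
      (hnext.comp_hasFDerivAt (h := fun y => f y (u j)) (hfx j hjN).hasFDerivAt)

variable [NormedAddCommGroup U] [InnerProductSpace ℝ U] [CompleteSpace U]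

theorem stationarity_of_isLocalMin (traj : (ℕ → U) → ℕ → X)
    (htraj0 : ∀ v, traj v 0 = x 0) (htraj : ∀ v i, traj v (i + 1) = f (traj v i) (v i))
    (hdyn : ∀ j < N, x (j + 1) = f (x j) (u j))
    (hmin : IsLocalMin (fun v => ∑ i ∈ range N, ℓ (traj v i) (v i) + φ (traj v N)) u)
    (hfx : ∀ j < N, DifferentiableAt ℝ (fun y => f y (u j)) (x j))
    (hfu : ∀ j < N, DifferentiableAt ℝ (fun w => f (x j) w) (u j))
    (hℓx : ∀ j < N, DifferentiableAt ℝ (fun y => ℓ y (u j)) (x j))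
    (hℓu : ∀ j < N, DifferentiableAt ℝ (fun w => ℓ (x j) w) (u j))
    (hφ : DifferentiableAt ℝ φ (x N))
    (hlamN : lam N = gradient φ (x N))
    (hlam : ∀ j < N, lam j = gradient (fun y => ℓ y (u j)) (x j)
      + ContinuousLinearMap.adjoint (fderiv ℝ (fun y => f y (u j)) (x j)) (lam (j + 1)))
    {k : ℕ} (hk : k < N) :
    gradient (fun w => ℓ (x k) w) (u k)
      + ContinuousLinearMap.adjoint (fderiv ℝ (fun w => f (x k) w) (u k)) (lam (k + 1)) = 0 := by
  have hstates (w : U) : ∀ i ≤ k, traj (Function.update u k w) i = x i :=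
    states_eq_of_controls_eq (htraj0 _) (fun i _ => htraj _ i) (fun i hi => hdyn i (by omega))
      (fun i hi => Function.update_of_ne hi.ne _ _)
  have hreduced (w : U) :
      ∑ i ∈ range N, ℓ (traj (Function.update u k w) i) (Function.update u k w i)
          + φ (traj (Function.update u k w) N) =
        ∑ i ∈ range k, ℓ (x i) (u i)
          + (ℓ (x k) w + costToGo f ℓ φ u (N - (k + 1)) (k + 1) (f (x k) w)) := by
    rw [cost_eq_sum_add_costToGo (htraj _) hk.le, show N - k = N - (k + 1) + 1 by omega,
      costToGo, hstates w k le_rfl, Function.update_self,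
      costToGo_congr (v' := u) (j := k + 1) fun i hi => Function.update_of_ne (by omega) _ _]
    congr 1
    refine sum_congr rfl fun i hi => ?_
    have hik := mem_range.mp hi
    rw [hstates w i hik.le, Function.update_of_ne hik.ne]
  have hloc : IsLocalMin (fun w => ∑ i ∈ range k, ℓ (x i) (u i)
      + (ℓ (x k) w + costToGo f ℓ φ u (N - (k + 1)) (k + 1) (f (x k) w))) (u k) := by
    rw [← Function.update_eq_self k u] at hmin
    simpa only [Function.comp_def, hreduced] using
      hmin.comp_continuous (continuous_const.update k continuous_id).continuousAt
  have hnext :=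
    hasGradientAt_costToGo hdyn hfx hℓx hφ hlamN hlam (N - (k + 1)) (k + 1) (by omega)
  rw [hdyn k hk] at hnext
  exact hloc.hasGradientAt_eq_zero <| HasGradientAt.const_add ((hℓu k hk).hasGradientAt.add
    (hnext.comp_hasFDerivAt (h := fun w => f (x k) w) (hfu k hk).hasFDerivAt)) _

end Stationarity

theorem stmt0_general (nx nu nθ N : ℕ)
    (f : E nx → E nu → E nθ → E nx)
    (ℓ : E nx → E nu → E nθ → ℝ)
    (φ : E nx → E nθ → ℝ)
    (ξ : E nθ → E nx)
    (hf : ContDiff ℝ 1 fun p : E nx × E nu × E nθ => f p.1 p.2.1 p.2.2)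
    (hℓ : ContDiff ℝ 1 fun p : E nx × E nu × E nθ => ℓ p.1 p.2.1 p.2.2)
    (hφ : ContDiff ℝ 1 fun p : E nx × E nθ => φ p.1 p.2)
    (θ : E nθ)
    (x : ℕ → E nx) (u : ℕ → E nu)
    -- feasibility of the trajectory
    (hx0 : x 0 = ξ θ)
    (hdyn : ∀ k < N, x (k + 1) = f (x k) (u k) θ)
    -- the rollout map: states induced by an arbitrary control sequence
    (traj : (ℕ → E nu) → ℕ → E nx)
    (htraj0 : ∀ v, traj v 0 = ξ θ)
    (htraj : ∀ v k, traj v (k + 1) = f (traj v k) (v k) θ)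
    -- `u` is a local minimizer of the induced cost over control sequences
    (hmin : IsLocalMin
      (fun v : ℕ → E nu =>
        (∑ k ∈ Finset.range N, ℓ (traj v k) (v k) θ) + φ (traj v N) θ) u)
    -- the multipliers, defined backward
    (lam : ℕ → E nx)
    (hlamN : lam N = gradient (fun x' => φ x' θ) (x N))
    (hlam : ∀ k < N, lam k =
      gradient (fun x' => ℓ x' (u k) θ) (x k)
        + ContinuousLinearMap.adjoint (fderiv ℝ (fun x' => f x' (u k) θ) (x k)) (lam (k + 1))) :
    ∀ k < N, (0 : E nu) =
      gradient (fun u' => ℓ (x k) u' θ) (u k)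
        + ContinuousLinearMap.adjoint (fderiv ℝ (fun u' => f (x k) u' θ) (u k)) (lam (k + 1)) := by
  have hf' := hf.differentiable one_ne_zero
  have hℓ' := hℓ.differentiable one_ne_zero
  have hφ' := hφ.differentiable one_ne_zero
  intro k hk
  refine (stationarity_of_isLocalMin (f := fun y w => f y w θ) (ℓ := fun y w => ℓ y w θ)
    (φ := fun y => φ y θ) traj (fun v => (htraj0 v).trans hx0.symm) htraj hdyn hmin
    (fun j _ => ?_) (fun j _ => ?_) (fun j _ => ?_) (fun j _ => ?_) ?_ hlamN hlam hk).symm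
  · exact hf'.comp (f := fun y : E nx => (y, u j, θ)) (by fun_prop) |>.differentiableAt
  · exact hf'.comp (f := fun w : E nu => (x j, w, θ)) (by fun_prop) |>.differentiableAt
  · exact hℓ'.comp (f := fun y : E nx => (y, u j, θ)) (by fun_prop) |>.differentiableAt
  · exact hℓ'.comp (f := fun w : E nu => (x j, w, θ)) (by fun_prop) |>.differentiableAt
  · exact hφ'.comp (f := fun y : E nx => (y, θ)) (by fun_prop) |>.differentiableAt

/-- **Discrete-time first-order optimality conditions (Pontryagin/KKT).**
If the feasible trajectory `(x, u)` is a local minimizer of the induced cost (as a function of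
the control sequence alone, via the rollout map `traj`), then the multipliers `lam` defined
backward by `lam N = ∇ₓ φ(x_N, θ)` and
`lam k = ∇ₓ ℓ(x_k, u_k, θ) + (Dₓ f(x_k, u_k, θ))ᵀ lam (k+1)` satisfy the stationarity conditions
`0 = ∇ᵤ ℓ(x_k, u_k, θ) + (Dᵤ f(x_k, u_k, θ))ᵀ lam (k+1)` for every `k < N`. -/
theorem stmt0 (nx nu nθ N : ℕ)
    (f : E nx → E nu → E nθ → E nx)
    (ℓ : E nx → E nu → E nθ → ℝ)
    (φ : E nx → E nθ → ℝ)
    (ξ : E nθ → E nx)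
    (hf : ContDiff ℝ 1 fun p : E nx × E nu × E nθ => f p.1 p.2.1 p.2.2)
    (hℓ : ContDiff ℝ 1 fun p : E nx × E nu × E nθ => ℓ p.1 p.2.1 p.2.2)
    (hφ : ContDiff ℝ 1 fun p : E nx × E nθ => φ p.1 p.2)
    (hξ : ContDiff ℝ 1 ξ)
    (θ : E nθ)
    (x : ℕ → E nx) (u : ℕ → E nu)
    -- feasibility of the trajectory
    (hx0 : x 0 = ξ θ)
    (hdyn : ∀ k < N, x (k + 1) = f (x k) (u k) θ)
    -- the rollout map: states induced by an arbitrary control sequence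
    (traj : (ℕ → E nu) → ℕ → E nx)
    (htraj0 : ∀ v, traj v 0 = ξ θ)
    (htraj : ∀ v k, traj v (k + 1) = f (traj v k) (v k) θ)
    -- `u` is a local minimizer of the induced cost over control sequences
    (hmin : IsLocalMin
      (fun v : ℕ → E nu =>
        (∑ k ∈ Finset.range N, ℓ (traj v k) (v k) θ) + φ (traj v N) θ) u)
    -- the multipliers, defined backward
    (lam : ℕ → E nx)
    (hlamN : lam N = gradient (fun x' => φ x' θ) (x N))
    (hlam : ∀ k < N, lam k =
      gradient (fun x' => ℓ x' (u k) θ) (x k)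
        + ContinuousLinearMap.adjoint (fderiv ℝ (fun x' => f x' (u k) θ) (x k)) (lam (k + 1))) :
    ∀ k < N, (0 : E nu) =
      gradient (fun u' => ℓ (x k) u' θ) (u k)
        + ContinuousLinearMap.adjoint (fderiv ℝ (fun u' => f (x k) u' θ) (u k)) (lam (k + 1)) :=
  stmt0_general nx nu nθ N f ℓ φ ξ hf hℓ hφ θ x u hx0 hdyn traj htraj0 htraj hmin lam hlamN hlam
end
end

section
/- Differentiating the KKT conditions yields the Pontryagin differentiable programming equations (Corollary 4). Suppose f, ℓ, φ, ξ are twice continuously differentiable. Let θ ↦ (x_k(θ), u_k(θ), λ_k(θ))_{k} be a continuously differentiable family, defined on a neighborhood of θ₀, such that for every θ in that neighborhood the KKT conditions hold: x_0(θ) = ξ(θ); x_{k+1}(θ) = f(x_k(θ), u_k(θ), θ); λ_k(θ) = ∇_x ℓ + (D_x f)ᵀ λ_{k+1}(θ) evaluated at (x_k(θ), u_k(θ), θ); 0 = ∇_u ℓ + (D_u f)ᵀ λ_{k+1}(θ); and λ_N(θ) = ∇_x φ(x_N(θ), θ). Write H^{(k)}(x,u,θ,λ) = ℓ(x,u,θ)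 + λᵀ f(x,u,θ) for the stage Hamiltonian, and let 𝓛_xx^{(k)}, 𝓛_xu^{(k)}, 𝓛_ux^{(k)}, 𝓛_uu^{(k)}, 𝓛_xθ^{(k)}, 𝓛_uθ^{(k)} denote the corresponding second partial derivatives of H^{(k)} evaluated at (x_k(θ₀), u_k(θ₀), θ₀, λ_{k+1}(θ₀)). Then the Jacobians ∂x_k = Dx_k(θ₀), ∂u_k = Du_k(θ₀), ∂λ_k = Dλ_k(θ₀) satisfy: ∂x_0 = ξ_θ; ∂x_{k+1} = f_x ∂x_k + f_u ∂u_k + f_θ; ∂λ_k = 𝓛_xx^{(k)} ∂x_k + 𝓛_xu^{(k)} ∂u_k + f_xᵀ ∂λ_{k+1} + 𝓛_xθ^{(k)}; 0 = 𝓛_ux^{(k)} ∂x_k + 𝓛_uu^{(k)} ∂u_k + f_uᵀ ∂λ_{k+1} + 𝓛_uθ^{(k)}; and ∂λ_N = φ_xx ∂x_N + φ_xθ, where f_x, f_u, f_θ are the Jacobians of f and φ_xx, φ_xθ the second derivatives of φ, all evaluated along the trajectory at θ₀. -/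
open scoped InnerProductSpace

noncomputable section

/-!
Each PDP equation is the derivative at `θ₀` of a KKT identity that holds on a neighbourhood of
`θ₀`. Since `∇ₓℓ + (Dₓf)ᵀ μ` is the `x`-gradient of the Hamiltonian `ℓ + ⟪μ, f⟫`, and this
gradient is a `C¹` function of `(x, u, μ, θ)`, every right-hand side has the form
`θ ↦ K (a θ) … θ` with `K` jointly differentiable, and the chain rule splits its derivative into
partial derivatives. The partial derivative in `μ` is `(Dₓf)ᵀ`, the gradient being affine in `μ`.
-/

section ParametricChainRule

variable {A B C R Θ : Type*} [NormedAddCommGroup A] [NormedSpace ℝ A] [NormedAddCommGroup B]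
  [NormedSpace ℝ B] [NormedAddCommGroup C] [NormedSpace ℝ C] [NormedAddCommGroup R]
  [NormedSpace ℝ R] [NormedAddCommGroup Θ] [NormedSpace ℝ Θ] {θ₀ : Θ}

theorem fderiv_param_comp {K : A → Θ → R} {a : Θ → A}
    (hK : DifferentiableAt ℝ (fun p : A × Θ => K p.1 p.2) (a θ₀, θ₀))
    (ha : DifferentiableAt ℝ a θ₀) :
    fderiv ℝ (fun θ => K (a θ) θ) θ₀ =
      (fderiv ℝ (fun a' => K a' θ₀) (a θ₀)).comp (fderiv ℝ a θ₀)
        + fderiv ℝ (fun θ => K (a θ₀) θ) θ₀ := by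
  set L := fderiv ℝ (fun p : A × Θ => K p.1 p.2) (a θ₀, θ₀)
  have h₁ : HasFDerivAt (fun a' => K a' θ₀) (L.comp (.inl ℝ A Θ)) (a θ₀) :=
    hK.hasFDerivAt.comp (f := fun a' => (a', θ₀)) (a θ₀) (hasFDerivAt_prodMk_left (a θ₀) θ₀)
  have h₂ : HasFDerivAt (fun θ => K (a θ₀) θ) (L.comp (.inr ℝ A Θ)) θ₀ :=
    hK.hasFDerivAt.comp (f := fun θ => (a θ₀, θ)) θ₀ (hasFDerivAt_prodMk_right (a θ₀) θ₀)
  have h : HasFDerivAt (fun θ => K (a θ) θ) (L.comp ((fderiv ℝ a θ₀).prod (.id ℝ Θ))) θ₀ :=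
    hK.hasFDerivAt.comp (f := fun θ => (a θ, θ)) θ₀ (ha.hasFDerivAt.prodMk (hasFDerivAt_id θ₀))
  rw [h.fderiv, h₁.fderiv, h₂.fderiv]
  ext1 v
  simp only [ContinuousLinearMap.comp_apply, ContinuousLinearMap.prod_apply,
    add_apply, ContinuousLinearMap.inl_apply, ContinuousLinearMap.inr_apply,
    ContinuousLinearMap.id_apply, ← map_add, Prod.mk_add_mk, add_zero, zero_add]

theorem fderiv_param_comp₂ {K : A → B → Θ → R} {a : Θ → A} {b : Θ → B}
    (hK : DifferentiableAt ℝ (fun p : A × B × Θ => K p.1 p.2.1 p.2.2) (a θ₀, b θ₀, θ₀))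
    (ha : DifferentiableAt ℝ a θ₀) (hb : DifferentiableAt ℝ b θ₀) :
    fderiv ℝ (fun θ => K (a θ) (b θ) θ) θ₀ =
      (fderiv ℝ (fun a' => K a' (b θ₀) θ₀) (a θ₀)).comp (fderiv ℝ a θ₀)
        + (fderiv ℝ (fun b' => K (a θ₀) b' θ₀) (b θ₀)).comp (fderiv ℝ b θ₀)
        + fderiv ℝ (fun θ => K (a θ₀) (b θ₀) θ) θ₀ := by
  rw [fderiv_param_comp (K := fun a' θ => K a' (b θ) θ) ?_ ha,
    fderiv_param_comp (K := fun b' θ => K (a θ₀) b' θ) ?_ hb, add_assoc]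
  · exact hK.comp (f := fun p : B × Θ => (a θ₀, p.1, p.2)) (b θ₀, θ₀) (by fun_prop)
  · exact hK.comp (f := fun p : A × Θ => (p.1, b p.2, p.2)) (a θ₀, θ₀) (by fun_prop)

theorem fderiv_param_comp₃ {K : A → B → C → Θ → R} {a : Θ → A} {b : Θ → B} {c : Θ → C}
    (hK : DifferentiableAt ℝ (fun p : A × B × C × Θ => K p.1 p.2.1 p.2.2.1 p.2.2.2)
      (a θ₀, b θ₀, c θ₀, θ₀))
    (ha : DifferentiableAt ℝ a θ₀) (hb : DifferentiableAt ℝ b θ₀) (hc : DifferentiableAt ℝ c θ₀) :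
    fderiv ℝ (fun θ => K (a θ) (b θ) (c θ) θ) θ₀ =
      (fderiv ℝ (fun a' => K a' (b θ₀) (c θ₀) θ₀) (a θ₀)).comp (fderiv ℝ a θ₀)
        + (fderiv ℝ (fun b' => K (a θ₀) b' (c θ₀) θ₀) (b θ₀)).comp (fderiv ℝ b θ₀)
        + (fderiv ℝ (fun c' => K (a θ₀) (b θ₀) c' θ₀) (c θ₀)).comp (fderiv ℝ c θ₀)
        + fderiv ℝ (fun θ => K (a θ₀) (b θ₀) (c θ₀) θ) θ₀ := by
  rw [fderiv_param_comp (K := fun a' θ => K a' (b θ) (c θ) θ) ?_ ha,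
    fderiv_param_comp₂ (K := fun b' c' θ => K (a θ₀) b' c' θ) ?_ hb hc]
  · abel
  · exact hK.comp (f := fun p : B × C × Θ => (a θ₀, p)) (b θ₀, c θ₀, θ₀) (by fun_prop)
  · exact hK.comp (f := fun p : A × Θ => (p.1, b p.2, c p.2, p.2)) (a θ₀, θ₀) (by fun_prop)

end ParametricChainRule

section Gradient

variable {F G P : Type*} [NormedAddCommGroup F] [InnerProductSpace ℝ F] [CompleteSpace F]
  [NormedAddCommGroup G] [InnerProductSpace ℝ G] [CompleteSpace G]
  [NormedAddCommGroup P] [NormedSpace ℝ P]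

theorem gradient_add_inner {g : F → ℝ} {h : F → G} {y : F} (hg : DifferentiableAt ℝ g y)
    (hh : DifferentiableAt ℝ h y) (μ : G) :
    gradient (fun z => g z + ⟪μ, h z⟫_ℝ) y
      = gradient g y + ContinuousLinearMap.adjoint (fderiv ℝ h y) μ := by
  have hinner : HasFDerivAt (fun z => ⟪μ, h z⟫_ℝ) ((innerSL ℝ μ).comp (fderiv ℝ h y)) y :=
    (innerSL ℝ μ).hasFDerivAt.comp y hh.hasFDerivAt
  rw [gradient, (hg.hasFDerivAt.fun_add hinner).fderiv, map_add]
  rfl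

theorem hasFDerivAt_gradient_add_inner {g : F → ℝ} {h : F → G} {y : F}
    (hg : DifferentiableAt ℝ g y) (hh : DifferentiableAt ℝ h y) (μ₀ : G) :
    HasFDerivAt (fun μ => gradient (fun z => g z + ⟪μ, h z⟫_ℝ) y)
      (ContinuousLinearMap.adjoint (fderiv ℝ h y)) μ₀ := by
  simp_rw [gradient_add_inner hg hh]
  exact (ContinuousLinearMap.adjoint (fderiv ℝ h y)).hasFDerivAt.const_add _

theorem ContDiff.gradient {g : P → F → ℝ} {y : P → F} {m n : WithTop ℕ∞}
    (hg : ContDiff ℝ m (Function.uncurry g)) (hy : ContDiff ℝ n y) (hnm : n + 1 ≤ m) :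
    ContDiff ℝ n fun p => gradient (g p) (y p) :=
  -- over `ℝ` the conjugate-linear isometry `(toDual ℝ F).symm` is a linear one
  (InnerProductSpace.toDual ℝ F).symm.toLinearIsometry.toContinuousLinearMap.contDiff.comp (hg.fderiv hy hnm)

end Gradient

section Costate

variable {X U Y Θ : Type*} [NormedAddCommGroup X] [InnerProductSpace ℝ X] [CompleteSpace X]
  [NormedAddCommGroup U] [NormedSpace ℝ U] [NormedAddCommGroup Y] [InnerProductSpace ℝ Y]
  [CompleteSpace Y] [NormedAddCommGroup Θ] [NormedSpace ℝ Θ]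
  {ℓ : X → U → Θ → ℝ} {f : X → U → Θ → Y}

theorem fderiv_costate (hℓ : ContDiff ℝ 2 fun p : X × U × Θ => ℓ p.1 p.2.1 p.2.2)
    (hf : ContDiff ℝ 2 fun p : X × U × Θ => f p.1 p.2.1 p.2.2)
    {a : Θ → X} {b : Θ → U} {μ : Θ → Y} {θ₀ : Θ} (ha : DifferentiableAt ℝ a θ₀)
    (hb : DifferentiableAt ℝ b θ₀) (hμ : DifferentiableAt ℝ μ θ₀) :
    fderiv ℝ (fun θ => gradient (fun x' => ℓ x' (b θ) θ) (a θ)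
        + ContinuousLinearMap.adjoint (fderiv ℝ (fun x' => f x' (b θ) θ) (a θ)) (μ θ)) θ₀ =
      (fderiv ℝ (fun x' => gradient (fun x'' =>
          ℓ x'' (b θ₀) θ₀ + ⟪μ θ₀, f x'' (b θ₀) θ₀⟫_ℝ) x') (a θ₀)).comp (fderiv ℝ a θ₀)
        + (fderiv ℝ (fun u' => gradient (fun x'' =>
            ℓ x'' u' θ₀ + ⟪μ θ₀, f x'' u' θ₀⟫_ℝ) (a θ₀)) (b θ₀)).comp (fderiv ℝ b θ₀)
        + (ContinuousLinearMap.adjoint (fderiv ℝ (fun x' => f x' (b θ₀) θ₀) (a θ₀))).comp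
            (fderiv ℝ μ θ₀)
        + fderiv ℝ (fun θ' => gradient (fun x'' =>
            ℓ x'' (b θ₀) θ' + ⟪μ θ₀, f x'' (b θ₀) θ'⟫_ℝ) (a θ₀)) θ₀ := by
  have hℓx : ∀ u θ, Differentiable ℝ fun x' => ℓ x' u θ := fun u θ =>
    (hℓ.comp (f := fun x' => (x', u, θ)) (by fun_prop)).differentiable (by norm_num)
  have hfx : ∀ u θ, Differentiable ℝ fun x' => f x' u θ := fun u θ =>
    (hf.comp (f := fun x' => (x', u, θ)) (by fun_prop)).differentiable (by norm_num)
  have hH : ContDiff ℝ 2 fun q : (X × U × Y × Θ) × X =>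
      ℓ q.2 q.1.2.1 q.1.2.2.2 + ⟪q.1.2.2.1, f q.2 q.1.2.1 q.1.2.2.2⟫_ℝ :=
    (hℓ.comp (f := fun q : (X × U × Y × Θ) × X => (q.2, q.1.2.1, q.1.2.2.2)) (by fun_prop)).add
      ((contDiff_fst.snd.snd.fst).inner ℝ
        (hf.comp (f := fun q : (X × U × Y × Θ) × X => (q.2, q.1.2.1, q.1.2.2.2)) (by fun_prop)))
  have hgrad : Differentiable ℝ fun p : X × U × Y × Θ =>
      gradient (fun x'' => ℓ x'' p.2.1 p.2.2.2 + ⟪p.2.2.1, f x'' p.2.1 p.2.2.2⟫_ℝ) p.1 :=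
    (hH.gradient contDiff_fst (by norm_num)).differentiable one_ne_zero
  conv_lhs => arg 2; ext θ; rw [← gradient_add_inner (hℓx _ _ _) (hfx _ _ _)]
  rw [fderiv_param_comp₃ (K := fun x' u' μ' θ =>
      gradient (fun x'' => ℓ x'' u' θ + ⟪μ', f x'' u' θ⟫_ℝ) x') (hgrad _) ha hb hμ,
    (hasFDerivAt_gradient_add_inner (hℓx _ _ _) (hfx _ _ _) _).fderiv]

end Costate

section Stationarity

variable {X U Y Θ : Type*} [NormedAddCommGroup X] [NormedSpace ℝ X] [NormedAddCommGroup U]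
  [InnerProductSpace ℝ U] [CompleteSpace U] [NormedAddCommGroup Y] [InnerProductSpace ℝ Y]
  [CompleteSpace Y] [NormedAddCommGroup Θ] [NormedSpace ℝ Θ]
  {ℓ : X → U → Θ → ℝ} {f : X → U → Θ → Y}

theorem fderiv_stationarity (hℓ : ContDiff ℝ 2 fun p : X × U × Θ => ℓ p.1 p.2.1 p.2.2)
    (hf : ContDiff ℝ 2 fun p : X × U × Θ => f p.1 p.2.1 p.2.2)
    {a : Θ → X} {b : Θ → U} {μ : Θ → Y} {θ₀ : Θ} (ha : DifferentiableAt ℝ a θ₀)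
    (hb : DifferentiableAt ℝ b θ₀) (hμ : DifferentiableAt ℝ μ θ₀) :
    fderiv ℝ (fun θ => gradient (fun u' => ℓ (a θ) u' θ) (b θ)
        + ContinuousLinearMap.adjoint (fderiv ℝ (fun u' => f (a θ) u' θ) (b θ)) (μ θ)) θ₀ =
      (fderiv ℝ (fun x' => gradient (fun u'' =>
          ℓ x' u'' θ₀ + ⟪μ θ₀, f x' u'' θ₀⟫_ℝ) (b θ₀)) (a θ₀)).comp (fderiv ℝ a θ₀)
        + (fderiv ℝ (fun u' => gradient (fun u'' =>
            ℓ (a θ₀) u'' θ₀ + ⟪μ θ₀, f (a θ₀) u'' θ₀⟫_ℝ) u') (b θ₀)).comp (fderiv ℝ b θ₀)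
        + (ContinuousLinearMap.adjoint (fderiv ℝ (fun u' => f (a θ₀) u' θ₀) (b θ₀))).comp
            (fderiv ℝ μ θ₀)
        + fderiv ℝ (fun θ' => gradient (fun u'' =>
            ℓ (a θ₀) u'' θ' + ⟪μ θ₀, f (a θ₀) u'' θ'⟫_ℝ) (b θ₀)) θ₀ := by
  have swap : ContDiff ℝ 2 fun p : U × X × Θ => (p.2.1, p.1, p.2.2) := by fun_prop
  rw [fderiv_costate (ℓ := fun u x θ => ℓ x u θ) (f := fun u x θ => f x u θ)
    (hℓ.comp swap) (hf.comp swap) hb ha hμ, add_comm ((fderiv ℝ _ (b θ₀)).comp _)]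

end Stationarity

theorem stmt3_general (nx nu nθ N : ℕ)
    (f : E nx → E nu → E nθ → E nx)
    (ℓ : E nx → E nu → E nθ → ℝ)
    (φ : E nx → E nθ → ℝ)
    (ξ : E nθ → E nx)
    (hf : ContDiff ℝ 2 fun p : E nx × E nu × E nθ => f p.1 p.2.1 p.2.2)
    (hℓ : ContDiff ℝ 2 fun p : E nx × E nu × E nθ => ℓ p.1 p.2.1 p.2.2)
    (hφ : ContDiff ℝ 2 fun p : E nx × E nθ => φ p.1 p.2)
    (θ₀ : E nθ)
    (x : E nθ → ℕ → E nx) (u : E nθ → ℕ → E nu) (lam : E nθ → ℕ → E nx)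
    (V : Set (E nθ)) (hV : IsOpen V) (hθ₀V : θ₀ ∈ V)
    -- the family is continuously differentiable on `V`
    (hxC : ∀ k ≤ N, ContDiffOn ℝ 1 (fun θ => x θ k) V)
    (huC : ∀ k < N, ContDiffOn ℝ 1 (fun θ => u θ k) V)
    (hlamC : ∀ k ≤ N, ContDiffOn ℝ 1 (fun θ => lam θ k) V)
    -- KKT conditions hold on `V`
    (hkkt0 : ∀ θ ∈ V, x θ 0 = ξ θ)
    (hkktdyn : ∀ θ ∈ V, ∀ k < N, x θ (k + 1) = f (x θ k) (u θ k) θ)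
    (hkktlam : ∀ θ ∈ V, ∀ k < N, lam θ k =
      gradient (fun x' => ℓ x' (u θ k) θ) (x θ k)
        + ContinuousLinearMap.adjoint
            (fderiv ℝ (fun x' => f x' (u θ k) θ) (x θ k)) (lam θ (k + 1)))
    (hkktu : ∀ θ ∈ V, ∀ k < N, (0 : E nu) =
      gradient (fun u' => ℓ (x θ k) u' θ) (u θ k)
        + ContinuousLinearMap.adjoint
            (fderiv ℝ (fun u' => f (x θ k) u' θ) (u θ k)) (lam θ (k + 1)))
    (hkktN : ∀ θ ∈ V, lam θ N = gradient (fun x' => φ x' θ) (x θ N)) :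
    -- ∂x₀ = ξ_θ
    (fderiv ℝ (fun θ => x θ 0) θ₀ = fderiv ℝ ξ θ₀) ∧
    -- ∂x_{k+1} = f_x ∂x_k + f_u ∂u_k + f_θ
    (∀ k < N,
      fderiv ℝ (fun θ => x θ (k + 1)) θ₀ =
        (fderiv ℝ (fun x' => f x' (u θ₀ k) θ₀) (x θ₀ k)).comp
            (fderiv ℝ (fun θ => x θ k) θ₀)
        + (fderiv ℝ (fun u' => f (x θ₀ k) u' θ₀) (u θ₀ k)).comp
            (fderiv ℝ (fun θ => u θ k) θ₀)
        + fderiv ℝ (fun θ' => f (x θ₀ k) (u θ₀ k) θ') θ₀) ∧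
    -- ∂λ_k = 𝓛_xx ∂x_k + 𝓛_xu ∂u_k + f_xᵀ ∂λ_{k+1} + 𝓛_xθ
    (∀ k < N,
      fderiv ℝ (fun θ => lam θ k) θ₀ =
        (fderiv ℝ (fun x' =>
            gradient (fun x'' =>
              ℓ x'' (u θ₀ k) θ₀ + ⟪lam θ₀ (k + 1), f x'' (u θ₀ k) θ₀⟫_ℝ) x') (x θ₀ k)).comp
          (fderiv ℝ (fun θ => x θ k) θ₀)
        + (fderiv ℝ (fun u' =>
            gradient (fun x'' =>
              ℓ x'' u' θ₀ + ⟪lam θ₀ (k + 1), f x'' u' θ₀⟫_ℝ) (x θ₀ k)) (u θ₀ k)).comp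
          (fderiv ℝ (fun θ => u θ k) θ₀)
        + (ContinuousLinearMap.adjoint
            (fderiv ℝ (fun x' => f x' (u θ₀ k) θ₀) (x θ₀ k))).comp
          (fderiv ℝ (fun θ => lam θ (k + 1)) θ₀)
        + fderiv ℝ (fun θ' =>
            gradient (fun x'' =>
              ℓ x'' (u θ₀ k) θ' + ⟪lam θ₀ (k + 1), f x'' (u θ₀ k) θ'⟫_ℝ) (x θ₀ k)) θ₀) ∧
    -- 0 = 𝓛_ux ∂x_k + 𝓛_uu ∂u_k + f_uᵀ ∂λ_{k+1} + 𝓛_uθ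
    (∀ k < N,
      (0 : E nθ →L[ℝ] E nu) =
        (fderiv ℝ (fun x' =>
            gradient (fun u'' =>
              ℓ x' u'' θ₀ + ⟪lam θ₀ (k + 1), f x' u'' θ₀⟫_ℝ) (u θ₀ k)) (x θ₀ k)).comp
          (fderiv ℝ (fun θ => x θ k) θ₀)
        + (fderiv ℝ (fun u' =>
            gradient (fun u'' =>
              ℓ (x θ₀ k) u'' θ₀ + ⟪lam θ₀ (k + 1), f (x θ₀ k) u'' θ₀⟫_ℝ) u') (u θ₀ k)).comp
          (fderiv ℝ (fun θ => u θ k) θ₀)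
        + (ContinuousLinearMap.adjoint
            (fderiv ℝ (fun u' => f (x θ₀ k) u' θ₀) (u θ₀ k))).comp
          (fderiv ℝ (fun θ => lam θ (k + 1)) θ₀)
        + fderiv ℝ (fun θ' =>
            gradient (fun u'' =>
              ℓ (x θ₀ k) u'' θ' + ⟪lam θ₀ (k + 1), f (x θ₀ k) u'' θ'⟫_ℝ) (u θ₀ k)) θ₀) ∧
    -- ∂λ_N = φ_xx ∂x_N + φ_xθ
    (fderiv ℝ (fun θ => lam θ N) θ₀ =
      (fderiv ℝ (fun x' => gradient (fun x'' => φ x'' θ₀) x') (x θ₀ N)).comp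
          (fderiv ℝ (fun θ => x θ N) θ₀)
        + fderiv ℝ (fun θ' => gradient (fun x'' => φ x'' θ') (x θ₀ N)) θ₀) := by
  have hV₀ : V ∈ nhds θ₀ := hV.mem_nhds hθ₀V
  have hx : ∀ k ≤ N, DifferentiableAt ℝ (fun θ => x θ k) θ₀ := fun k hk =>
    ((hxC k hk).contDiffAt hV₀).differentiableAt one_ne_zero
  have hu : ∀ k < N, DifferentiableAt ℝ (fun θ => u θ k) θ₀ := fun k hk =>
    ((huC k hk).contDiffAt hV₀).differentiableAt one_ne_zero
  have hlam : ∀ k ≤ N, DifferentiableAt ℝ (fun θ => lam θ k) θ₀ := fun k hk =>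
    ((hlamC k hk).contDiffAt hV₀).differentiableAt one_ne_zero
  have hφgrad : Differentiable ℝ fun p : E nx × E nθ => gradient (fun x' => φ x' p.2) p.1 :=
    (ContDiff.gradient (g := fun p x' => φ x' p.2)
      (hφ.comp (f := fun q : (E nx × E nθ) × E nx => (q.2, q.1.2)) (by fun_prop)) contDiff_fst
      (by norm_num)).differentiable one_ne_zero
  refine ⟨(Filter.eventuallyEq_of_mem hV₀ hkkt0).fderiv_eq, fun k hk => ?_, fun k hk => ?_,
    fun k hk => ?_, ?_⟩
  · rw [(Filter.eventuallyEq_of_mem hV₀ fun θ hθ => hkktdyn θ hθ k hk).fderiv_eq]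
    exact fderiv_param_comp₂ (hf.differentiable (by norm_num) _) (hx k hk.le) (hu k hk)
  · rw [(Filter.eventuallyEq_of_mem hV₀ fun θ hθ => hkktlam θ hθ k hk).fderiv_eq]
    exact fderiv_costate hℓ hf (hx k hk.le) (hu k hk) (hlam (k + 1) hk)
  · rw [← fderiv_stationarity hℓ hf (hx k hk.le) (hu k hk) (hlam (k + 1) hk),
      (Filter.eventuallyEq_of_mem hV₀ fun θ hθ => (hkktu θ hθ k hk).symm).fderiv_eq,
      fderiv_const_apply]
  · rw [(Filter.eventuallyEq_of_mem hV₀ hkktN).fderiv_eq]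
    exact fderiv_param_comp (K := fun a θ => gradient (fun x' => φ x' θ) a) (hφgrad _)
      (hx N le_rfl)

/-- **Differentiating the KKT conditions yields the Pontryagin differentiable programming
equations (Corollary 4).**  Given a `C¹` family `θ ↦ (x θ k, u θ k, lam θ k)` satisfying the KKT
conditions of the parameterized optimal control problem on a neighborhood `V` of `θ₀`, the
Jacobians `∂x_k = D (x · k)(θ₀)`, `∂u_k = D (u · k)(θ₀)`, `∂λ_k = D (lam · k)(θ₀)` satisfy the
PDP equations, where the second derivatives `𝓛_xx, 𝓛_xu, 𝓛_ux, 𝓛_uu, 𝓛_xθ, 𝓛_uθ` are those of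
the stage Hamiltonian `H⁽ᵏ⁾(x,u,θ) = ℓ(x,u,θ) + ⟪λ_{k+1}(θ₀), f(x,u,θ)⟫`. -/
theorem stmt3 (nx nu nθ N : ℕ)
    (f : E nx → E nu → E nθ → E nx)
    (ℓ : E nx → E nu → E nθ → ℝ)
    (φ : E nx → E nθ → ℝ)
    (ξ : E nθ → E nx)
    (hf : ContDiff ℝ 2 fun p : E nx × E nu × E nθ => f p.1 p.2.1 p.2.2)
    (hℓ : ContDiff ℝ 2 fun p : E nx × E nu × E nθ => ℓ p.1 p.2.1 p.2.2)
    (hφ : ContDiff ℝ 2 fun p : E nx × E nθ => φ p.1 p.2)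
    (hξ : ContDiff ℝ 2 ξ)
    (θ₀ : E nθ)
    (x : E nθ → ℕ → E nx) (u : E nθ → ℕ → E nu) (lam : E nθ → ℕ → E nx)
    (V : Set (E nθ)) (hV : IsOpen V) (hθ₀V : θ₀ ∈ V)
    -- the family is continuously differentiable on `V`
    (hxC : ∀ k ≤ N, ContDiffOn ℝ 1 (fun θ => x θ k) V)
    (huC : ∀ k < N, ContDiffOn ℝ 1 (fun θ => u θ k) V)
    (hlamC : ∀ k ≤ N, ContDiffOn ℝ 1 (fun θ => lam θ k) V)
    -- KKT conditions hold on `V`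
    (hkkt0 : ∀ θ ∈ V, x θ 0 = ξ θ)
    (hkktdyn : ∀ θ ∈ V, ∀ k < N, x θ (k + 1) = f (x θ k) (u θ k) θ)
    (hkktlam : ∀ θ ∈ V, ∀ k < N, lam θ k =
      gradient (fun x' => ℓ x' (u θ k) θ) (x θ k)
        + ContinuousLinearMap.adjoint
            (fderiv ℝ (fun x' => f x' (u θ k) θ) (x θ k)) (lam θ (k + 1)))
    (hkktu : ∀ θ ∈ V, ∀ k < N, (0 : E nu) =
      gradient (fun u' => ℓ (x θ k) u' θ) (u θ k)
        + ContinuousLinearMap.adjoint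
            (fderiv ℝ (fun u' => f (x θ k) u' θ) (u θ k)) (lam θ (k + 1)))
    (hkktN : ∀ θ ∈ V, lam θ N = gradient (fun x' => φ x' θ) (x θ N)) :
    -- ∂x₀ = ξ_θ
    (fderiv ℝ (fun θ => x θ 0) θ₀ = fderiv ℝ ξ θ₀) ∧
    -- ∂x_{k+1} = f_x ∂x_k + f_u ∂u_k + f_θ
    (∀ k < N,
      fderiv ℝ (fun θ => x θ (k + 1)) θ₀ =
        (fderiv ℝ (fun x' => f x' (u θ₀ k) θ₀) (x θ₀ k)).comp
            (fderiv ℝ (fun θ => x θ k) θ₀)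
        + (fderiv ℝ (fun u' => f (x θ₀ k) u' θ₀) (u θ₀ k)).comp
            (fderiv ℝ (fun θ => u θ k) θ₀)
        + fderiv ℝ (fun θ' => f (x θ₀ k) (u θ₀ k) θ') θ₀) ∧
    -- ∂λ_k = 𝓛_xx ∂x_k + 𝓛_xu ∂u_k + f_xᵀ ∂λ_{k+1} + 𝓛_xθ
    (∀ k < N,
      fderiv ℝ (fun θ => lam θ k) θ₀ =
        (fderiv ℝ (fun x' =>
            gradient (fun x'' =>
              ℓ x'' (u θ₀ k) θ₀ + ⟪lam θ₀ (k + 1), f x'' (u θ₀ k) θ₀⟫_ℝ) x') (x θ₀ k)).comp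
          (fderiv ℝ (fun θ => x θ k) θ₀)
        + (fderiv ℝ (fun u' =>
            gradient (fun x'' =>
              ℓ x'' u' θ₀ + ⟪lam θ₀ (k + 1), f x'' u' θ₀⟫_ℝ) (x θ₀ k)) (u θ₀ k)).comp
          (fderiv ℝ (fun θ => u θ k) θ₀)
        + (ContinuousLinearMap.adjoint
            (fderiv ℝ (fun x' => f x' (u θ₀ k) θ₀) (x θ₀ k))).comp
          (fderiv ℝ (fun θ => lam θ (k + 1)) θ₀)
        + fderiv ℝ (fun θ' =>
            gradient (fun x'' =>
              ℓ x'' (u θ₀ k) θ' + ⟪lam θ₀ (k + 1), f x'' (u θ₀ k) θ'⟫_ℝ) (x θ₀ k)) θ₀) ∧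
    -- 0 = 𝓛_ux ∂x_k + 𝓛_uu ∂u_k + f_uᵀ ∂λ_{k+1} + 𝓛_uθ
    (∀ k < N,
      (0 : E nθ →L[ℝ] E nu) =
        (fderiv ℝ (fun x' =>
            gradient (fun u'' =>
              ℓ x' u'' θ₀ + ⟪lam θ₀ (k + 1), f x' u'' θ₀⟫_ℝ) (u θ₀ k)) (x θ₀ k)).comp
          (fderiv ℝ (fun θ => x θ k) θ₀)
        + (fderiv ℝ (fun u' =>
            gradient (fun u'' =>
              ℓ (x θ₀ k) u'' θ₀ + ⟪lam θ₀ (k + 1), f (x θ₀ k) u'' θ₀⟫_ℝ) u') (u θ₀ k)).comp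
          (fderiv ℝ (fun θ => u θ k) θ₀)
        + (ContinuousLinearMap.adjoint
            (fderiv ℝ (fun u' => f (x θ₀ k) u' θ₀) (u θ₀ k))).comp
          (fderiv ℝ (fun θ => lam θ (k + 1)) θ₀)
        + fderiv ℝ (fun θ' =>
            gradient (fun u'' =>
              ℓ (x θ₀ k) u'' θ' + ⟪lam θ₀ (k + 1), f (x θ₀ k) u'' θ'⟫_ℝ) (u θ₀ k)) θ₀) ∧
    -- ∂λ_N = φ_xx ∂x_N + φ_xθ
    (fderiv ℝ (fun θ => lam θ N) θ₀ =
      (fderiv ℝ (fun x' => gradient (fun x'' => φ x'' θ₀) x') (x θ₀ N)).comp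
          (fderiv ℝ (fun θ => x θ N) θ₀)
        + fderiv ℝ (fun θ' => gradient (fun x'' => φ x'' θ') (x θ₀ N)) θ₀) :=
  stmt3_general nx nu nθ N f ℓ φ ξ hf hℓ hφ θ₀ x u lam V hV hθ₀V hxC huC hlamC hkkt0 hkktdyn hkktlam
    hkktu hkktN

end
end

section
/- DDP backward induction step (Appendix E). Fix matrices 𝓛_xx ∈ ℝ^{n_x×n_x}, 𝓛_xu ∈ ℝ^{n_x×n_u}, 𝓛_ux = 𝓛_xuᵀ, 𝓛_uu ∈ ℝ^{n_u×n_u}, f_x ∈ ℝ^{n_x×n_x}, f_u ∈ ℝ^{n_x×n_u}, a symmetric matrix V_xx⁺ ∈ ℝ^{n_x×n_x}, and vectors g_x ∈ ℝ^{n_x}, g_u ∈ ℝ^{n_u}, Ṽ_x⁺ ∈ ℝ^{n_x}. Define Q̃_u = g_u + f_uᵀ Ṽ_x⁺, Q_uu = 𝓛_uu + f_uᵀ V_xx⁺ f_u, Q_ux = 𝓛_ux + f_uᵀ V_xx⁺ f_x, Q̃_x = g_x + f_xᵀ Ṽ_x⁺, Q_xx = 𝓛_xx + f_xᵀ V_xx⁺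 f_x, Q_xu = Q_uxᵀ, and assume Q_uu is invertible; set k̃ = −Q_uu^{-1} Q̃_u, K = −Q_uu^{-1} Q_ux, Ṽ_x = Q̃_x + Q_xu k̃, and V_xx = Q_xx + Q_xu K. Suppose vectors δx, δu, δx⁺, δλ, δλ⁺ satisfy: δλ⁺ = Ṽ_x⁺ + V_xx⁺ δx⁺; δx⁺ = f_x δx + f_u δu; 0 = g_u + 𝓛_ux δx + 𝓛_uu δu + f_uᵀ δλ⁺; and δλ = g_x + 𝓛_xx δx + 𝓛_xu δu + f_xᵀ δλ⁺. Then δu = k̃ + K δx and δλ = Ṽ_x + V_xx δx. -/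
open scoped Matrix

noncomputable section

/-- **DDP backward induction step (Appendix E).**
Given the stage matrices and the next-step value quantities `Ṽ_x⁺, V_xx⁺`, define the `Q`
quantities, the gains `k̃, K`, and the current value quantities `Ṽ_x, V_xx`.  If the vectors
`δx, δu, δx⁺, δlam, δlam⁺` satisfy the corresponding block of the KKT system, then
`δu = k̃ + K δx` and `δlam = Ṽ_x + V_xx δx`. -/
theorem stmt5 (nx nu : ℕ)
    (Lxx : Matrix (Fin nx) (Fin nx) ℝ) (Lxu : Matrix (Fin nx) (Fin nu) ℝ)
    (Lux : Matrix (Fin nu) (Fin nx) ℝ) (Luu : Matrix (Fin nu) (Fin nu) ℝ)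
    (hLux : Lux = Lxuᵀ)
    (fx : Matrix (Fin nx) (Fin nx) ℝ) (fu : Matrix (Fin nx) (Fin nu) ℝ)
    (Vxxp : Matrix (Fin nx) (Fin nx) ℝ) (hVxxp : Vxxp.IsSymm)
    (gx : Fin nx → ℝ) (gu : Fin nu → ℝ) (Vxp : Fin nx → ℝ)
    -- the Q quantities
    (Qu : Fin nu → ℝ) (hQu : Qu = gu + fuᵀ *ᵥ Vxp)
    (Quu : Matrix (Fin nu) (Fin nu) ℝ) (hQuu : Quu = Luu + fuᵀ * Vxxp * fu)
    (Qux : Matrix (Fin nu) (Fin nx) ℝ) (hQux : Qux = Lux + fuᵀ * Vxxp * fx)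
    (Qx : Fin nx → ℝ) (hQx : Qx = gx + fxᵀ *ᵥ Vxp)
    (Qxx : Matrix (Fin nx) (Fin nx) ℝ) (hQxx : Qxx = Lxx + fxᵀ * Vxxp * fx)
    (Qxu : Matrix (Fin nx) (Fin nu) ℝ) (hQxu : Qxu = Quxᵀ)
    (hQuuInv : IsUnit Quu)
    -- gains and value update
    (ktilde : Fin nu → ℝ) (hktilde : ktilde = -(Quu⁻¹ *ᵥ Qu))
    (K : Matrix (Fin nu) (Fin nx) ℝ) (hK : K = -(Quu⁻¹ * Qux))
    (Vx : Fin nx → ℝ) (hVx : Vx = Qx + Qxu *ᵥ ktilde)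
    (Vxx : Matrix (Fin nx) (Fin nx) ℝ) (hVxx : Vxx = Qxx + Qxu * K)
    -- the vectors satisfying the block of the KKT system
    (δx δxp δlam δlamp : Fin nx → ℝ) (δu : Fin nu → ℝ)
    (hδlamp : δlamp = Vxp + Vxxp *ᵥ δxp)
    (hδxp : δxp = fx *ᵥ δx + fu *ᵥ δu)
    (hδu : 0 = gu + Lux *ᵥ δx + Luu *ᵥ δu + fuᵀ *ᵥ δlamp)
    (hδlam : δlam = gx + Lxx *ᵥ δx + Lxu *ᵥ δu + fxᵀ *ᵥ δlamp) :
    δu = ktilde + K *ᵥ δx ∧ δlam = Vx + Vxx *ᵥ δx := by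
  have hdet : IsUnit Quu.det := (Matrix.isUnit_iff_isUnit_det Quu).mp hQuuInv
  subst hδxp hδlamp hδlam
  have hQxu' : Qxu = Lxu + fxᵀ * Vxxp * fu := by
    rw [hQxu, hQux, hLux]
    simp only [Matrix.transpose_add, Matrix.transpose_mul, Matrix.transpose_transpose,
      hVxxp.eq, Matrix.mul_assoc]
  have key : Quu *ᵥ δu = -(Qu + Qux *ᵥ δx) := by
    rw [hQu, hQux, hQuu]
    simp only [Matrix.mulVec_add, Matrix.add_mulVec, Matrix.mulVec_mulVec,
      Matrix.mul_assoc] at hδu ⊢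
    linear_combination (norm := module) -hδu
  have hδu' : δu = ktilde + K *ᵥ δx := by
    have h2 : Quu⁻¹ *ᵥ (Quu *ᵥ δu) = δu := by
      rw [Matrix.mulVec_mulVec, Matrix.nonsing_inv_mul _ hdet, Matrix.one_mulVec]
    rw [← h2, key, hktilde, hK]
    simp only [Matrix.mulVec_neg, Matrix.mulVec_add, Matrix.neg_mulVec, Matrix.mulVec_mulVec]
    abel
  refine ⟨hδu', ?_⟩
  rw [hVx, hVxx, hQx, hQxx, hδu', hQxu']
  simp only [Matrix.mulVec_add, Matrix.add_mulVec, Matrix.mulVec_mulVec, Matrix.mul_add, Matrix.add_mul,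
    Matrix.mul_assoc]
  abel
end
end

section
/- Closed-form solution of the differentiated Pontryagin (PDP) system (Appendix H). For each k = 0,…,N−1 fix matrices 𝓛_xx^{(k)}, 𝓛_xu^{(k)} (with 𝓛_ux^{(k)} = (𝓛_xu^{(k)})ᵀ), 𝓛_uu^{(k)}, 𝓛_xθ^{(k)}, 𝓛_uθ^{(k)}, f_x^{(k)}, f_u^{(k)}, f_θ^{(k)} of the appropriate sizes, and fix symmetric φ_xx ∈ ℝ^{n_x×n_x}, φ_xθ ∈ ℝ^{n_x×n_θ}, ξ_θ ∈ ℝ^{n_x×n_θ}. Define backward in time V_xx^{(N)} = φ_xx, V_xθ^{(N)} = φ_xθ and, for k = N−1,…,0: Q_uu^{(k)} = 𝓛_uu^{(k)} + (f_u^{(k)})ᵀ V_xx^{(k+1)} f_u^{(k)}, Q_ux^{(k)} = 𝓛_ux^{(k)} + (f_u^{(k)})ᵀ V_xx^{(k+1)} f_x^{(k)}, Q_uθ^{(k)} = 𝓛_uθ^{(k)} + (f_u^{(k)})ᵀ V_xθ^{(k+1)} + (f_u^{(k)})ᵀ V_xx^{(k+1)} f_θ^{(k)}, Q_xθ^{(k)}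 = 𝓛_xθ^{(k)} + (f_x^{(k)})ᵀ V_xθ^{(k+1)} + (f_x^{(k)})ᵀ V_xx^{(k+1)} f_θ^{(k)}, Q_xx^{(k)} = 𝓛_xx^{(k)} + (f_x^{(k)})ᵀ V_xx^{(k+1)} f_x^{(k)}, V_xx^{(k)} = Q_xx^{(k)} − (Q_ux^{(k)})ᵀ (Q_uu^{(k)})^{-1} Q_ux^{(k)}, V_xθ^{(k)} = Q_xθ^{(k)} − (Q_ux^{(k)})ᵀ (Q_uu^{(k)})^{-1} Q_uθ^{(k)}, assuming each Q_uu^{(k)} is invertible. Define forward: ∂x_0 = ξ_θ, ∂u_k = −(Q_uu^{(k)})^{-1} Q_uθ^{(k)} − (Q_uu^{(k)})^{-1} Q_ux^{(k)} ∂x_k, ∂x_{k+1} = f_x^{(k)} ∂x_k + f_u^{(k)} ∂u_k + f_θ^{(k)}, and ∂λ_k = V_xθ^{(k)} + V_xx^{(k)} ∂x_k. Then these matrices satisfy the full PDP system: ∂λ_k = 𝓛_xx^{(k)} ∂x_k + 𝓛_xu^{(k)} ∂u_k + (f_x^{(k)})ᵀ ∂λ_{k+1} + 𝓛_xθ^{(k)}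 for all k = 0,…,N−1; 0 = 𝓛_ux^{(k)} ∂x_k + 𝓛_uu^{(k)} ∂u_k + (f_u^{(k)})ᵀ ∂λ_{k+1} + 𝓛_uθ^{(k)} for all k; and ∂λ_N = φ_xx ∂x_N + φ_xθ. -/
open scoped Matrix

noncomputable section

/-- **Closed-form solution of the differentiated Pontryagin (PDP) system (Appendix H).**
Given the stage data, the backward Riccati-type recursions defining `V_xx, V_xθ` (through the
`Q` quantities), and the forward recursion defining `∂x_k, ∂u_k` together with
`∂λ_k = V_xθ^{(k)} + V_xx^{(k)} ∂x_k`, these matrices satisfy the full PDP system. -/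
theorem stmt6 (nx nu nθ N : ℕ)
    (Lxx : ℕ → Matrix (Fin nx) (Fin nx) ℝ) (Lxu : ℕ → Matrix (Fin nx) (Fin nu) ℝ)
    (Lux : ℕ → Matrix (Fin nu) (Fin nx) ℝ) (Luu : ℕ → Matrix (Fin nu) (Fin nu) ℝ)
    (Lxθ : ℕ → Matrix (Fin nx) (Fin nθ) ℝ) (Luθ : ℕ → Matrix (Fin nu) (Fin nθ) ℝ)
    (fx : ℕ → Matrix (Fin nx) (Fin nx) ℝ) (fu : ℕ → Matrix (Fin nx) (Fin nu) ℝ)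
    (fθ : ℕ → Matrix (Fin nx) (Fin nθ) ℝ)
    (hLxxSymm : ∀ k < N, (Lxx k).IsSymm) (hLuuSymm : ∀ k < N, (Luu k).IsSymm)
    (hLux : ∀ k < N, Lux k = (Lxu k)ᵀ)
    (φxx : Matrix (Fin nx) (Fin nx) ℝ) (hφxx : φxx.IsSymm)
    (φxθ : Matrix (Fin nx) (Fin nθ) ℝ) (ξθ : Matrix (Fin nx) (Fin nθ) ℝ)
    -- backward recursion
    (Vxx : ℕ → Matrix (Fin nx) (Fin nx) ℝ) (Vxθ : ℕ → Matrix (Fin nx) (Fin nθ) ℝ)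
    (Quu : ℕ → Matrix (Fin nu) (Fin nu) ℝ) (Qux : ℕ → Matrix (Fin nu) (Fin nx) ℝ)
    (Quθ : ℕ → Matrix (Fin nu) (Fin nθ) ℝ) (Qxθ : ℕ → Matrix (Fin nx) (Fin nθ) ℝ)
    (Qxx : ℕ → Matrix (Fin nx) (Fin nx) ℝ)
    (hVxxN : Vxx N = φxx) (hVxθN : Vxθ N = φxθ)
    (hQuu : ∀ k < N, Quu k = Luu k + (fu k)ᵀ * Vxx (k + 1) * fu k)
    (hQux : ∀ k < N, Qux k = Lux k + (fu k)ᵀ * Vxx (k + 1) * fx k)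
    (hQuθ : ∀ k < N, Quθ k = Luθ k + (fu k)ᵀ * Vxθ (k + 1) + (fu k)ᵀ * Vxx (k + 1) * fθ k)
    (hQxθ : ∀ k < N, Qxθ k = Lxθ k + (fx k)ᵀ * Vxθ (k + 1) + (fx k)ᵀ * Vxx (k + 1) * fθ k)
    (hQxx : ∀ k < N, Qxx k = Lxx k + (fx k)ᵀ * Vxx (k + 1) * fx k)
    (hQuuInv : ∀ k < N, IsUnit (Quu k))
    (hVxx : ∀ k < N, Vxx k = Qxx k - (Qux k)ᵀ * (Quu k)⁻¹ * Qux k)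
    (hVxθ : ∀ k < N, Vxθ k = Qxθ k - (Qux k)ᵀ * (Quu k)⁻¹ * Quθ k)
    -- forward recursion
    (dx : ℕ → Matrix (Fin nx) (Fin nθ) ℝ) (du : ℕ → Matrix (Fin nu) (Fin nθ) ℝ)
    (dlam : ℕ → Matrix (Fin nx) (Fin nθ) ℝ)
    (hdx0 : dx 0 = ξθ)
    (hdu : ∀ k < N, du k = -((Quu k)⁻¹ * Quθ k) - (Quu k)⁻¹ * Qux k * dx k)
    (hdx : ∀ k < N, dx (k + 1) = fx k * dx k + fu k * du k + fθ k)
    (hdlam : ∀ k ≤ N, dlam k = Vxθ k + Vxx k * dx k) :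
    -- the full PDP system
    (∀ k < N, dlam k = Lxx k * dx k + Lxu k * du k + (fx k)ᵀ * dlam (k + 1) + Lxθ k) ∧
    (∀ k < N, (0 : Matrix (Fin nu) (Fin nθ) ℝ)
        = Lux k * dx k + Luu k * du k + (fu k)ᵀ * dlam (k + 1) + Luθ k) ∧
    dlam N = φxx * dx N + φxθ := by
  -- symmetry of Vxx on the relevant range
  have hVsymm : ∀ k ≤ N, (Vxx k)ᵀ = Vxx k := by
    have key : ∀ d k, k + d = N → (Vxx k)ᵀ = Vxx k := by
      intro d
      induction d with
      | zero =>
        intro k hk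
        simp only [Nat.add_zero] at hk
        subst hk
        rw [hVxxN]; exact hφxx
      | succ d ih =>
        intro k hk
        have hkN : k < N := by omega
        have ihs : (Vxx (k + 1))ᵀ = Vxx (k + 1) := ih (k + 1) (by omega)
        have hQuuSymm : (Quu k)ᵀ = Quu k := by
          rw [hQuu k hkN]
          simp only [Matrix.transpose_add, Matrix.transpose_mul, Matrix.transpose_transpose,
            ihs, Matrix.mul_assoc]
          rw [hLuuSymm k hkN]
        have hQuuInvSymm : ((Quu k)⁻¹)ᵀ = (Quu k)⁻¹ := by
          rw [Matrix.transpose_nonsing_inv, hQuuSymm]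
        rw [hVxx k hkN, hQxx k hkN]
        simp only [Matrix.transpose_sub, Matrix.transpose_add, Matrix.transpose_mul,
          Matrix.transpose_transpose, ihs, hQuuInvSymm, Matrix.mul_assoc]
        rw [hLxxSymm k hkN]
    intro k hk; exact key (N - k) k (by omega)
  have hdet : ∀ k < N, IsUnit (Quu k).det := fun k hk =>
    (Matrix.isUnit_iff_isUnit_det _).mp (hQuuInv k hk)
  have hcancel : ∀ k, k < N → ∀ (X : Matrix (Fin nu) (Fin nθ) ℝ),
      Quu k * ((Quu k)⁻¹ * X) = X := by
    intro k hk X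
    rw [← Matrix.mul_assoc, Matrix.mul_nonsing_inv _ (hdet k hk), Matrix.one_mul]
  refine ⟨?_, ?_, ?_⟩
  · intro k hkN
    have hA : (Vxx (k + 1))ᵀ = Vxx (k + 1) := hVsymm (k + 1) (by omega)
    rw [hdlam k hkN.le, hVxθ k hkN, hVxx k hkN, hdlam (k + 1) (by omega), hdx k hkN,
      hdu k hkN, hQxθ k hkN, hQxx k hkN, hQux k hkN, hQuθ k hkN, hLux k hkN]
    simp only [Matrix.transpose_add, Matrix.transpose_mul, Matrix.transpose_transpose, hA,
      Matrix.mul_add, Matrix.add_mul, Matrix.mul_sub, Matrix.sub_mul, Matrix.mul_neg,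
      Matrix.neg_mul, Matrix.mul_assoc]
    abel
  · intro k hkN
    have key : Lux k * dx k + Luu k * du k + (fu k)ᵀ * dlam (k + 1) + Luθ k
        = Qux k * dx k + Quu k * du k + Quθ k := by
      rw [hdlam (k + 1) (by omega), hdx k hkN, hQux k hkN, hQuθ k hkN, hQuu k hkN]
      simp only [Matrix.mul_add, Matrix.add_mul, Matrix.mul_assoc]
      abel
    rw [key, hdu k hkN]
    simp only [Matrix.mul_sub, Matrix.mul_neg, hcancel k hkN, Matrix.mul_assoc]
    abel
  · rw [hdlam N le_rfl, hVxxN, hVxθN, add_comm]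
end
end

section
/- One-step control-Jacobian error bound (from the proof of Theorem 7). Let (x̂_k, û_k) and (x*_k, u*_k) both lie in the set S on which Assumption 8 holds, let ∂x̂_k, ∂x*_k ∈ ℝ^{n_x×n_θ} be matrices with ‖∂x*_k‖ ≤ ν_k for some ν_k ≥ 0, and define ∂û_k = −Q_uu(x̂_k,û_k)^{-1}(Q_uθ(x̂_k,û_k) + Q_ux(x̂_k,û_k) ∂x̂_k) and ∂u*_k = −Q_uu(x*_k,u*_k)^{-1}(Q_uθ(x*_k,u*_k) + Q_ux(x*_k,u*_k) ∂x*_k). Then ‖∂û_k − ∂u*_k‖ ≤ (M/α + ν_k L/α + K(γ + β ν_k)/α²) · ‖(x̂_k,û_k) − (x*_k,u*_k)‖ + (β/α) · ‖∂x̂_k − ∂x*_k‖. -/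
noncomputable section

/-- The state-control pair space `ℝ^{n_x} × ℝ^{n_u}` with the Euclidean (L²) norm. -/
abbrev P (nx nu : ℕ) : Type := WithLp 2 (E nx × E nu)

/-- **One-step control-Jacobian error bound (from the proof of Theorem 7).**
Let `p̂ = (x̂_k, û_k)` and `ps = (x*_k, u*_k)` lie in the set `S` on which Assumption 8 holds,
let `∂x̂_k, ∂x*_k` satisfy `‖∂x*_k‖ ≤ ν_k`, and define
`∂û_k = −Q_uu(p̂)⁻¹(Q_uθ(p̂) + Q_ux(p̂) ∂x̂_k)` (stated equivalently as
`Q_uu(p̂) ∘ ∂û_k = −(Q_uθ(p̂) + Q_ux(p̂) ∘ ∂x̂_k)`), similarly `∂u*_k`.  Then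
`‖∂û_k − ∂u*_k‖ ≤ (M/α + ν_k L/α + K(γ + β ν_k)/α²)‖p̂ − ps‖ + (β/α)‖∂x̂_k − ∂x*_k‖`. -/
theorem stmt8 (nx nu nθ : ℕ)
    (S : Set (P nx nu))
    (Quu : P nx nu → (E nu →L[ℝ] E nu))
    (Qux : P nx nu → (E nx →L[ℝ] E nu))
    (Quθ : P nx nu → (E nθ →L[ℝ] E nu))
    (K α L β M γ : ℝ)
    -- Assumption 8
    (hα : 0 < α)
    (hQuuLip : ∀ p ∈ S, ∀ q ∈ S, ‖Quu p - Quu q‖ ≤ K * ‖p - q‖)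
    (hQuuCond : ∀ p ∈ S, ∀ v : E nu, α * ‖v‖ ≤ ‖Quu p v‖)
    (hQuxLip : ∀ p ∈ S, ∀ q ∈ S, ‖Qux p - Qux q‖ ≤ L * ‖p - q‖)
    (hQuxBd : ∀ p ∈ S, ‖Qux p‖ ≤ β)
    (hQuθLip : ∀ p ∈ S, ∀ q ∈ S, ‖Quθ p - Quθ q‖ ≤ M * ‖p - q‖)
    (hQuθBd : ∀ p ∈ S, ‖Quθ p‖ ≤ γ)
    -- the two points
    (ph ps : P nx nu) (hph : ph ∈ S) (hps : ps ∈ S)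
    -- the state Jacobians
    (ν : ℝ) (dxh dxs : E nθ →L[ℝ] E nx) (hdxs : ‖dxs‖ ≤ ν)
    -- the control Jacobians
    (duh dus : E nθ →L[ℝ] E nu)
    (hduh : (Quu ph).comp duh = -(Quθ ph + (Qux ph).comp dxh))
    (hdus : (Quu ps).comp dus = -(Quθ ps + (Qux ps).comp dxs)) :
    ‖duh - dus‖ ≤
      (M / α + ν * L / α + K * (γ + β * ν) / α ^ 2) * ‖ph - ps‖
        + (β / α) * ‖dxh - dxs‖ := by
  have hν : (0:ℝ) ≤ ν := le_trans (norm_nonneg _) hdxs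
  have hβ : (0:ℝ) ≤ β := le_trans (norm_nonneg _) (hQuxBd ps hps)
  have hγ : (0:ℝ) ≤ γ := le_trans (norm_nonneg _) (hQuθBd ps hps)
  -- bound on ‖dus‖
  have hdus_norm : ‖dus‖ ≤ (γ + β * ν) / α := by
    apply ContinuousLinearMap.opNorm_le_bound _ (by positivity)
    intro v
    have h1 : α * ‖dus v‖ ≤ ‖(Quu ps) (dus v)‖ := hQuuCond ps hps _
    have h2 : (Quu ps) (dus v) = (-(Quθ ps + (Qux ps).comp dxs)) v := by
      rw [← hdus]; rfl
    have h3 : ‖(-(Quθ ps + (Qux ps).comp dxs)) v‖ ≤ (γ + β * ν) * ‖v‖ := by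
      simp only [ContinuousLinearMap.neg_apply, ContinuousLinearMap.add_apply,
        ContinuousLinearMap.comp_apply, norm_neg]
      calc ‖Quθ ps v + (Qux ps) (dxs v)‖ ≤ ‖Quθ ps v‖ + ‖(Qux ps) (dxs v)‖ := norm_add_le _ _
        _ ≤ γ * ‖v‖ + β * (ν * ‖v‖) := by
            gcongr
            · exact le_trans ((Quθ ps).le_opNorm v) (by gcongr; exact hQuθBd ps hps)
            · calc ‖(Qux ps) (dxs v)‖ ≤ ‖Qux ps‖ * ‖dxs v‖ := (Qux ps).le_opNorm _
                _ ≤ β * (ν * ‖v‖) := by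
                    apply mul_le_mul (hQuxBd ps hps) _ (norm_nonneg _) hβ
                    exact le_trans (dxs.le_opNorm v)
                      (mul_le_mul_of_nonneg_right hdxs (norm_nonneg v))
        _ = (γ + β * ν) * ‖v‖ := by ring
    rw [h2] at h1
    have := le_trans h1 h3
    rw [div_mul_eq_mul_div, le_div_iff₀ hα]
    linarith [this]
  -- decomposition
  have hdecomp : (Quu ph).comp (duh - dus) =
      -(Quθ ph - Quθ ps) - (Qux ph - Qux ps).comp dxs - (Qux ph).comp (dxh - dxs)
        - (Quu ph - Quu ps).comp dus := by
    refine ContinuousLinearMap.ext fun v => ?_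
    have e1 := congrFun (congrArg DFunLike.coe hduh) v
    have e2 := congrFun (congrArg DFunLike.coe hdus) v
    simp only [ContinuousLinearMap.comp_apply, ContinuousLinearMap.neg_apply,
      ContinuousLinearMap.add_apply] at e1 e2
    simp only [ContinuousLinearMap.comp_apply, ContinuousLinearMap.sub_apply,
      ContinuousLinearMap.neg_apply, ContinuousLinearMap.add_apply, map_sub]
    rw [e1, e2]
    abel
  -- norm bound on the composition
  have hcomp : ‖(Quu ph).comp (duh - dus)‖ ≤
      M * ‖ph - ps‖ + (L * ‖ph - ps‖) * ν + β * ‖dxh - dxs‖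
        + (K * ‖ph - ps‖) * ((γ + β * ν) / α) := by
    rw [hdecomp]
    have t1 : ‖-(Quθ ph - Quθ ps)‖ ≤ M * ‖ph - ps‖ := by
      rw [norm_neg]; exact hQuθLip ph hph ps hps
    have t2 : ‖(Qux ph - Qux ps).comp dxs‖ ≤ (L * ‖ph - ps‖) * ν := by
      refine le_trans (ContinuousLinearMap.opNorm_comp_le _ _) ?_
      exact mul_le_mul (hQuxLip ph hph ps hps) hdxs (norm_nonneg _)
        (le_trans (norm_nonneg _) (hQuxLip ph hph ps hps))
    have t3 : ‖(Qux ph).comp (dxh - dxs)‖ ≤ β * ‖dxh - dxs‖ := by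
      refine le_trans (ContinuousLinearMap.opNorm_comp_le _ _) ?_
      exact mul_le_mul_of_nonneg_right (hQuxBd ph hph) (norm_nonneg _)
    have t4 : ‖(Quu ph - Quu ps).comp dus‖ ≤ (K * ‖ph - ps‖) * ((γ + β * ν) / α) := by
      refine le_trans (ContinuousLinearMap.opNorm_comp_le _ _) ?_
      exact mul_le_mul (hQuuLip ph hph ps hps) hdus_norm (norm_nonneg _)
        (le_trans (norm_nonneg _) (hQuuLip ph hph ps hps))
    calc ‖-(Quθ ph - Quθ ps) - (Qux ph - Qux ps).comp dxs - (Qux ph).comp (dxh - dxs)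
          - (Quu ph - Quu ps).comp dus‖
        ≤ ‖-(Quθ ph - Quθ ps)‖ + ‖(Qux ph - Qux ps).comp dxs‖ + ‖(Qux ph).comp (dxh - dxs)‖
          + ‖(Quu ph - Quu ps).comp dus‖ := by
          refine le_trans (norm_sub_le _ _) ?_
          gcongr
          refine le_trans (norm_sub_le _ _) ?_
          gcongr
          exact norm_sub_le _ _
      _ ≤ _ := by linarith
  -- conditioning: ‖duh - dus‖ ≤ (1/α) ‖Quu ph ∘ (duh - dus)‖
  have hcond : α * ‖duh - dus‖ ≤ ‖(Quu ph).comp (duh - dus)‖ := by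
    rw [mul_comm]
    rw [← le_div_iff₀ hα] at *
    apply ContinuousLinearMap.opNorm_le_bound _ (by positivity)
    intro v
    have h1 : α * ‖(duh - dus) v‖ ≤ ‖(Quu ph) ((duh - dus) v)‖ := hQuuCond ph hph _
    have h2 : ‖(Quu ph) ((duh - dus) v)‖ ≤ ‖(Quu ph).comp (duh - dus)‖ * ‖v‖ :=
      ((Quu ph).comp (duh - dus)).le_opNorm v
    rw [div_mul_eq_mul_div, le_div_iff₀ hα]
    calc ‖(duh - dus) v‖ * α = α * ‖(duh - dus) v‖ := by ring
      _ ≤ _ := le_trans h1 h2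
  have hfinal := le_trans hcond hcomp
  rw [← le_div_iff₀' hα] at hfinal
  refine le_trans hfinal ?_
  have : (M * ‖ph - ps‖ + L * ‖ph - ps‖ * ν + β * ‖dxh - dxs‖
      + K * ‖ph - ps‖ * ((γ + β * ν) / α)) / α =
      (M / α + ν * L / α + K * (γ + β * ν) / α ^ 2) * ‖ph - ps‖ + β / α * ‖dxh - dxs‖ := by
    field_simp
    ring
  exact le_of_eq this
end
end
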